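/- With T as the composition of the T^(j) maps using the harmonic mean Ω_HM(z1,z2)=2z1z2/(z1+z2), the sequence y_ℓ = F(T^ℓ(x)) of sums of entries of iterates is monotonically nonincreasing and bounded below by K·(∏ x_k)^(1/K), hence convergent. -/

import Mathlib

/-- The elementary transformation `T^(j)` (0-based index `j`). -/
noncomputable def Tj {K : ℕ} (Ω : ℝ → ℝ → ℝ) (j : ℕ) (x : Fin K → ℝ) : Fin K → ℝ :=
  fun k =>
    if h : j + 1 < K then
      if (k : ℕ) = j then Ω (x ⟨j, by omega⟩) (x ⟨j + 1, h⟩)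
      else if (k : ℕ) = j + 1 then
        x ⟨j, by omega⟩ * x ⟨j + 1, h⟩ / Ω (x ⟨j, by omega⟩) (x ⟨j + 1, h⟩)
      else x k
    else x k

/-- The full sweep `T` using the harmonic mean `Ω_HM`. -/
noncomputable def THM {K : ℕ} (x : Fin K → ℝ) : Fin K → ℝ :=
  (List.range (K - 1)).foldl (fun y j => Tj (fun z1 z2 => 2 * z1 * z2 / (z1 + z2)) j y) x

/-!
An elementary step replaces a pair `(a, b)` of entries by `(HM(a, b), ab / HM(a, b))`, and
`ab / HM(a, b)` is the arithmetic mean `(a + b) / 2`. So the product of the entries is invariant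
while their sum does not increase, because `HM ≤ AM`. Along the iterates the sum is therefore
nonincreasing and, by AM-GM applied to vectors of the fixed product `∏ x`, bounded below by
`K (∏ x)^(1/K)`; a monotone bounded sequence converges.
-/

open Finset Function

@[to_additive]
theorem Finset.prod_update_update {ι M : Type*} [Fintype ι] [DecidableEq ι] [CommMonoid M]
    (f : ι → M) {i i' : ι} (h : i ≠ i') (a b : M) :
    (∏ k, update (update f i' b) i a k) * (f i * f i') = a * b * ∏ k, f k := by
  have hi' : i' ∈ univ.erase i := mem_erase.2 ⟨h.symm, mem_univ i'⟩
  have split : ∀ g : ι → M,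
      ∏ k, g k = g i * (g i' * ∏ k ∈ (univ.erase i).erase i', g k) := fun g => by
    rw [mul_prod_erase _ _ hi', mul_prod_erase _ _ (mem_univ i)]
  have off : ∀ k ∈ (univ.erase i).erase i', update (update f i' b) i a k = f k := by
    intro k hk
    obtain ⟨hki', hki⟩ : k ≠ i' ∧ k ≠ i := by simpa using hk
    rw [update_of_ne hki, update_of_ne hki']
  rw [split f, split, prod_congr rfl off, update_self, update_of_ne h.symm, update_self]
  ac_rfl

theorem Real.card_mul_prod_rpow_one_div_card_le_sum {ι : Type*} (s : Finset ι) (z : ι → ℝ)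
    (hz : ∀ i ∈ s, 0 ≤ z i) :
    (#s : ℝ) * (∏ i ∈ s, z i) ^ ((1 : ℝ) / #s) ≤ ∑ i ∈ s, z i := by
  rcases s.eq_empty_or_nonempty with rfl | hs
  · simp
  have hcard : (0 : ℝ) < #s := by exact_mod_cast hs.card_pos
  have := Real.geom_mean_le_arith_mean s (fun _ => 1) z (fun _ _ => zero_le_one)
    (by simpa using hcard) hz
  simp only [Real.rpow_one, one_mul, sum_const, nsmul_eq_mul, mul_one] at this
  rw [one_div, mul_comm]
  exact (le_div_iff₀ hcard).1 this

theorem Tj_of_not_lt {K : ℕ} (Ω : ℝ → ℝ → ℝ) {j : ℕ} (h : ¬j + 1 < K) :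
    Tj (K := K) Ω j = id :=
  funext fun _ => funext fun _ => dif_neg h

theorem Tj_eq_update {K : ℕ} (Ω : ℝ → ℝ → ℝ) {j : ℕ} (h : j + 1 < K) (x : Fin K → ℝ) :
    Tj Ω j x =
      update
        (update x ⟨j + 1, h⟩
          (x ⟨j, by omega⟩ * x ⟨j + 1, h⟩ / Ω (x ⟨j, by omega⟩) (x ⟨j + 1, h⟩)))
        ⟨j, by omega⟩ (Ω (x ⟨j, by omega⟩) (x ⟨j + 1, h⟩)) := by
  funext k
  simp only [Tj, dif_pos h, update_apply, Fin.ext_iff]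

structure PreservesProdDecreasesSum {ι : Type*} [Fintype ι] (f : (ι → ℝ) → ι → ℝ) : Prop where
  pos : ∀ x : ι → ℝ, (∀ k, 0 < x k) → ∀ k, 0 < f x k
  prod_eq : ∀ x : ι → ℝ, (∀ k, 0 < x k) → ∏ k, f x k = ∏ k, x k
  sum_le : ∀ x : ι → ℝ, (∀ k, 0 < x k) → ∑ k, f x k ≤ ∑ k, x k

namespace PreservesProdDecreasesSum

variable {ι : Type*} [Fintype ι]

theorem id : PreservesProdDecreasesSum (id : (ι → ℝ) → ι → ℝ) :=
  ⟨fun _ hx => hx, fun _ _ => rfl, fun _ _ => le_rfl⟩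

theorem comp {f g : (ι → ℝ) → ι → ℝ} (hf : PreservesProdDecreasesSum f)
    (hg : PreservesProdDecreasesSum g) : PreservesProdDecreasesSum (f ∘ g) where
  pos x hx := hf.pos _ (hg.pos x hx)
  prod_eq x hx := (hf.prod_eq _ (hg.pos x hx)).trans (hg.prod_eq x hx)
  sum_le x hx := (hf.sum_le _ (hg.pos x hx)).trans (hg.sum_le x hx)

theorem iterate {f : (ι → ℝ) → ι → ℝ} (hf : PreservesProdDecreasesSum f) :
    ∀ n : ℕ, PreservesProdDecreasesSum f^[n]
  | 0 => .id
  | n + 1 => (iterate hf n).comp hf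

theorem foldl {α : Type*} {g : α → (ι → ℝ) → ι → ℝ} (hg : ∀ a, PreservesProdDecreasesSum (g a)) :
    ∀ l : List α, PreservesProdDecreasesSum fun x => l.foldl (fun y a => g a y) x
  | [] => .id
  | a :: l => (foldl hg l).comp (hg a)

end PreservesProdDecreasesSum

theorem preservesProdDecreasesSum_Tj {K : ℕ} {Ω : ℝ → ℝ → ℝ}
    (hpos : ∀ a b, 0 < a → 0 < b → 0 < Ω a b)
    (hsum : ∀ a b, 0 < a → 0 < b → Ω a b + a * b / Ω a b ≤ a + b) (j : ℕ) :
    PreservesProdDecreasesSum (Tj (K := K) Ω j) := by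
  by_cases h : j + 1 < K
  swap
  · rw [Tj_of_not_lt Ω h]
    exact .id
  set i : Fin K := ⟨j, by omega⟩
  set i' : Fin K := ⟨j + 1, h⟩
  have hii' : i ≠ i' := by simp [i, i', Fin.ext_iff]
  refine ⟨fun x hx k => ?_, fun x hx => ?_, fun x hx => ?_⟩ <;>
    have hΩ := hpos _ _ (hx i) (hx i') <;> rw [Tj_eq_update Ω h]
  · rcases eq_or_ne k i with rfl | hki
    · rwa [update_self]
    rcases eq_or_ne k i' with rfl | hki'
    · rw [update_of_ne hki, update_self]; have := hx i; have := hx i'; positivity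
    · rw [update_of_ne hki, update_of_ne hki']; exact hx k
  · have := prod_update_update x hii' (Ω (x i) (x i')) (x i * x i' / Ω (x i) (x i'))
    rw [mul_div_cancel₀ _ hΩ.ne'] at this
    exact mul_right_cancel₀ (mul_pos (hx i) (hx i')).ne' (this.trans (mul_comm _ _))
  · have := sum_update_update x hii' (Ω (x i) (x i')) (x i * x i' / Ω (x i) (x i'))
    linarith [hsum _ _ (hx i) (hx i')]

theorem preservesProdDecreasesSum_THM {K : ℕ} : PreservesProdDecreasesSum (THM (K := K)) := by
  refine PreservesProdDecreasesSum.foldl (fun j => preservesProdDecreasesSum_Tj ?_ ?_ j) _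
  · intro a b ha hb; positivity
  · intro a b ha hb
    have hab : 0 < a + b := by positivity
    have hAM : a * b / (2 * a * b / (a + b)) = (a + b) / 2 := by field_simp
    have hHM_le_AM : 2 * a * b / (a + b) ≤ (a + b) / 2 := by
      rw [div_le_div_iff₀ hab two_pos]; nlinarith [sq_nonneg (a - b)]
    linarith

theorem THM_iterates_convergent_general (K : ℕ)
    (x : Fin K → ℝ) (hx : ∀ k, 0 < x k) :
    Antitone (fun ℓ : ℕ => ∑ k, (THM^[ℓ] x) k) ∧
    (∀ ℓ : ℕ, (K : ℝ) * (∏ k, x k) ^ ((1 : ℝ) / K) ≤ ∑ k, (THM^[ℓ] x) k) ∧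
    ∃ y : ℝ, Filter.Tendsto (fun ℓ : ℕ => ∑ k, (THM^[ℓ] x) k) Filter.atTop (nhds y) := by
  have hT := preservesProdDecreasesSum_THM (K := K)
  have hpos (ℓ : ℕ) := (hT.iterate ℓ).pos x hx
  have hanti : Antitone fun ℓ : ℕ => ∑ k, (THM^[ℓ] x) k := antitone_nat_of_succ_le fun ℓ => by
    rw [iterate_succ_apply']
    exact hT.sum_le _ (hpos ℓ)
  have hbdd (ℓ : ℕ) : (K : ℝ) * (∏ k, x k) ^ ((1 : ℝ) / K) ≤ ∑ k, (THM^[ℓ] x) k := by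
    rw [← (hT.iterate ℓ).prod_eq x hx]
    simpa using Real.card_mul_prod_rpow_one_div_card_le_sum univ _ fun k _ => (hpos ℓ k).le
  exact ⟨hanti, hbdd, _, tendsto_atTop_ciInf hanti ⟨_, Set.forall_mem_range.2 hbdd⟩⟩

theorem THM_iterates_convergent (K : ℕ) (hK : 2 ≤ K)
    (x : Fin K → ℝ) (hx : ∀ k, 0 < x k) :
    Antitone (fun ℓ : ℕ => ∑ k, (THM^[ℓ] x) k) ∧
    (∀ ℓ : ℕ, (K : ℝ) * (∏ k, x k) ^ ((1 : ℝ) / K) ≤ ∑ k, (THM^[ℓ] x) k) ∧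
    ∃ y : ℝ, Filter.Tendsto (fun ℓ : ℕ => ∑ k, (THM^[ℓ] x) k) Filter.atTop (nhds y) :=
  THM_iterates_convergent_general K x hx
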